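/- arXiv:2507.15740 — 4 statements merged into one kernel-verified Lean document; each statement's English description precedes it below -/
import Mathlib

section
/- Let γ₀ : [0,1] → ℝ³ be a horizontal regular curve and let γ : [0,T̂) × [0,1] → ℝ³ be a smooth family of curves with γ(0,·) = γ₀ satisfying ∂ₜγ(t,u) = m(t,u) N(t,u) - (∫₀ᵘ m(t,ξ)|∂ᵤγ(t,ξ)|_g dξ) X₃(γ(t,u)) for a smooth function m, where N is the horizontal normal and |∂ᵤγ(t,u)|_g = √((∂ᵤγ¹)² + (∂ᵤγ²)²) ≠ 0 everywhere. Then γ(t,·) is horizontal for every t ∈ [0,T̂). -/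
open Set

section helpers
variable {f : ℝ × ℝ → ℝ}

private lemma lineR (t u : ℝ) : HasDerivAt (fun v : ℝ => ((t, v) : ℝ × ℝ)) ((0 : ℝ), (1 : ℝ)) u :=
  (hasDerivAt_const u t).prodMk (hasDerivAt_id u)

private lemma lineL (t u : ℝ) : HasDerivAt (fun τ : ℝ => ((τ, u) : ℝ × ℝ)) ((1 : ℝ), (0 : ℝ)) t :=
  (hasDerivAt_id t).prodMk (hasDerivAt_const t u)

private lemma pd_snd (hf : ContDiff ℝ (⊤ : ℕ∞) f) (t u : ℝ) :
    HasDerivAt (fun v => f (t, v)) (fderiv ℝ f (t, u) (0, 1)) u :=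
  ((hf.differentiable (by simp) (t, u)).hasFDerivAt).comp_hasDerivAt u (lineR t u)

private lemma pd_fst (hf : ContDiff ℝ (⊤ : ℕ∞) f) (t u : ℝ) :
    HasDerivAt (fun τ => f (τ, u)) (fderiv ℝ f (t, u) (1, 0)) t :=
  ((hf.differentiable (by simp) (t, u)).hasFDerivAt).comp_hasDerivAt t (lineL t u)

private lemma hfd (hf : ContDiff ℝ (⊤ : ℕ∞) f) : ContDiff ℝ 1 (fderiv ℝ f) :=
  hf.fderiv_right (WithTop.coe_le_coe.2 le_top)

private lemma pd2_fst (hf : ContDiff ℝ (⊤ : ℕ∞) f) (t u : ℝ) (w : ℝ × ℝ) :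
    HasDerivAt (fun τ => fderiv ℝ f (τ, u) w)
      (fderiv ℝ (fderiv ℝ f) (t, u) (1, 0) w) t := by
  have h1 : HasFDerivAt (fderiv ℝ f) (fderiv ℝ (fderiv ℝ f) (t, u)) (t, u) :=
    (((hfd hf).differentiable one_ne_zero) (t, u)).hasFDerivAt
  have h2 : HasDerivAt (fun τ => fderiv ℝ f (τ, u))
      (fderiv ℝ (fderiv ℝ f) (t, u) (1, 0)) t := h1.comp_hasDerivAt t (lineL t u)
  simpa using h2.clm_apply (hasDerivAt_const t w)

private lemma pd2_snd (hf : ContDiff ℝ (⊤ : ℕ∞) f) (t u : ℝ) (w : ℝ × ℝ) :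
    HasDerivAt (fun v => fderiv ℝ f (t, v) w)
      (fderiv ℝ (fderiv ℝ f) (t, u) (0, 1) w) u := by
  have h1 : HasFDerivAt (fderiv ℝ f) (fderiv ℝ (fderiv ℝ f) (t, u)) (t, u) :=
    (((hfd hf).differentiable one_ne_zero) (t, u)).hasFDerivAt
  have h2 : HasDerivAt (fun v => fderiv ℝ f (t, v))
      (fderiv ℝ (fderiv ℝ f) (t, u) (0, 1)) u := h1.comp_hasDerivAt u (lineR t u)
  simpa using h2.clm_apply (hasDerivAt_const u w)

private lemma symm2 (hf : ContDiff ℝ (⊤ : ℕ∞) f) (t u : ℝ) :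
    fderiv ℝ (fderiv ℝ f) (t, u) (1, 0) (0, 1)
      = fderiv ℝ (fderiv ℝ f) (t, u) (0, 1) (1, 0) :=
  (hf.contDiffAt.isSymmSndFDerivAt (by simp only [minSmoothness_of_isRCLikeNormedField]; exact WithTop.coe_le_coe.2 le_top)) _ _

-- continuity of the partial derivative in the second variable
private lemma contDeriv (hf : ContDiff ℝ (⊤ : ℕ∞) f) (t : ℝ) :
    Continuous (fun v => deriv (fun x => f (t, x)) v) := by
  have h : Continuous (fun v => fderiv ℝ f (t, v) (0, 1)) :=
    (((hfd hf).continuous).comp (continuous_const.prodMk continuous_id)).clm_apply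
      continuous_const
  exact h.congr fun v => ((pd_snd hf t v).deriv).symm

end helpers

set_option maxHeartbeats 2000000 in
private lemma key_hasDeriv (That : ℝ)
    (γ1 γ2 γ3 m s : ℝ → ℝ → ℝ)
    (hsm1 : ContDiff ℝ (⊤ : ℕ∞) (fun p : ℝ × ℝ => γ1 p.1 p.2))
    (hsm2 : ContDiff ℝ (⊤ : ℕ∞) (fun p : ℝ × ℝ => γ2 p.1 p.2))
    (hsm3 : ContDiff ℝ (⊤ : ℕ∞) (fun p : ℝ × ℝ => γ3 p.1 p.2))
    (hsmm : ContDiff ℝ (⊤ : ℕ∞) (fun p : ℝ × ℝ => m p.1 p.2))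
    (hs : ∀ t u, s t u = Real.sqrt ((deriv (γ1 t) u)^2 + (deriv (γ2 t) u)^2))
    (hreg : ∀ t ∈ Ico (0:ℝ) That, ∀ u ∈ Icc (0:ℝ) 1, s t u ≠ 0)
    (hflow1 : ∀ t ∈ Ico (0:ℝ) That, ∀ u ∈ Icc (0:ℝ) 1,
        deriv (fun τ => γ1 τ u) t = m t u * (-(deriv (γ2 t) u) / s t u))
    (hflow2 : ∀ t ∈ Ico (0:ℝ) That, ∀ u ∈ Icc (0:ℝ) 1,
        deriv (fun τ => γ2 τ u) t = m t u * (deriv (γ1 t) u / s t u))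
    (hflow3 : ∀ t ∈ Ico (0:ℝ) That, ∀ u ∈ Icc (0:ℝ) 1,
        deriv (fun τ => γ3 τ u) t =
          m t u * (((1/2) * γ2 t u * deriv (γ2 t) u
              + (1/2) * γ1 t u * deriv (γ1 t) u) / s t u)
            - ∫ ξ in (0:ℝ)..u, m t ξ * s t ξ)
    (τ : ℝ) (hτ : τ ∈ Ico (0:ℝ) That) (u : ℝ) (hu : u ∈ Ioo (0:ℝ) 1) :
    HasDerivAt (fun τ' => deriv (γ3 τ') u
      - (-(1/2) * γ2 τ' u * deriv (γ1 τ') u + (1/2) * γ1 τ' u * deriv (γ2 τ') u)) 0 τ := by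
  have huI : u ∈ Icc (0:ℝ) 1 := Ioo_subset_Icc_self hu
  set F1 : ℝ × ℝ → ℝ := fun p => γ1 p.1 p.2 with hF1
  set F2 : ℝ × ℝ → ℝ := fun p => γ2 p.1 p.2 with hF2
  set F3 : ℝ × ℝ → ℝ := fun p => γ3 p.1 p.2 with hF3
  set Fm : ℝ × ℝ → ℝ := fun p => m p.1 p.2 with hFm
  have hσ0 : s τ u ≠ 0 := hreg τ hτ u huI
  -- abbreviations for values
  set x' : ℝ := deriv (γ1 τ) u with hx'
  set y' : ℝ := deriv (γ2 τ) u with hy'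
  set μ : ℝ := m τ u with hμ
  set σ : ℝ := s τ u with hσ
  -- u-direction HasDerivAt's at u (for fixed τ)
  have hXd : HasDerivAt (γ1 τ) x' u := by
    rw [hx', (pd_snd hsm1 τ u).deriv]; exact pd_snd hsm1 τ u
  have hYd : HasDerivAt (γ2 τ) y' u := by
    rw [hy', (pd_snd hsm2 τ u).deriv]; exact pd_snd hsm2 τ u
  have hμd : HasDerivAt (fun v => m τ v) (fderiv ℝ Fm (τ, u) (0, 1)) u := pd_snd hsmm τ u
  set Mu' : ℝ := fderiv ℝ Fm (τ, u) (0, 1) with hMu'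
  set x2 : ℝ := fderiv ℝ (fderiv ℝ F1) (τ, u) (0, 1) (0, 1) with hx2
  set y2 : ℝ := fderiv ℝ (fderiv ℝ F2) (τ, u) (0, 1) (0, 1) with hy2
  have hx'd : HasDerivAt (fun v => deriv (γ1 τ) v) x2 u :=
    (pd2_snd hsm1 τ u (0, 1)).congr_of_eventuallyEq
      (Filter.Eventually.of_forall fun v => (pd_snd hsm1 τ v).deriv)
  have hy'd : HasDerivAt (fun v => deriv (γ2 τ) v) y2 u :=
    (pd2_snd hsm2 τ u (0, 1)).congr_of_eventuallyEq
      (Filter.Eventually.of_forall fun v => (pd_snd hsm2 τ v).deriv)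
  -- derivative of s τ ·
  have hqne : x' ^ 2 + y' ^ 2 ≠ 0 := by
    intro h
    apply hσ0
    show s τ u = 0
    rw [hs τ u]
    show Real.sqrt (x' ^ 2 + y' ^ 2) = 0
    rw [h, Real.sqrt_zero]
  have hq : HasDerivAt (fun v => (deriv (γ1 τ) v) ^ 2 + (deriv (γ2 τ) v) ^ 2)
      (2 * x' * x2 + 2 * y' * y2) u := by
    have h : HasDerivAt (fun v => (deriv (γ1 τ) v) ^ 2 + (deriv (γ2 τ) v) ^ 2) _ u :=
      (hx'd.pow 2).add (hy'd.pow 2)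
    convert h using 1
    push_cast
    rw [← hx', ← hy']
    ring
  set σ' : ℝ := (2 * x' * x2 + 2 * y' * y2) / (2 * σ) with hσ'
  have hsd : HasDerivAt (fun v => s τ v) σ' u := by
    have h := hq.sqrt hqne
    have h2 : HasDerivAt (fun v => s τ v)
        ((2 * x' * x2 + 2 * y' * y2) / (2 * Real.sqrt (x' ^ 2 + y' ^ 2))) u :=
      h.congr_of_eventuallyEq (Filter.Eventually.of_forall fun v => hs τ v)
    have e : Real.sqrt (x' ^ 2 + y' ^ 2) = σ := ((hs τ u).symm : _)
    rw [hσ', ← e]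
    exact h2
  -- t-direction HasDerivAt's at τ (for fixed u)
  have h3t : HasDerivAt (fun τ' => deriv (γ3 τ') u)
      (fderiv ℝ (fderiv ℝ F3) (τ, u) (1, 0) (0, 1)) τ :=
    (pd2_fst hsm3 τ u (0, 1)).congr_of_eventuallyEq
      (Filter.Eventually.of_forall fun τ' => (pd_snd hsm3 τ' u).deriv)
  have h1t : HasDerivAt (fun τ' => deriv (γ1 τ') u)
      (fderiv ℝ (fderiv ℝ F1) (τ, u) (1, 0) (0, 1)) τ :=
    (pd2_fst hsm1 τ u (0, 1)).congr_of_eventuallyEq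
      (Filter.Eventually.of_forall fun τ' => (pd_snd hsm1 τ' u).deriv)
  have h2t : HasDerivAt (fun τ' => deriv (γ2 τ') u)
      (fderiv ℝ (fderiv ℝ F2) (τ, u) (1, 0) (0, 1)) τ :=
    (pd2_fst hsm2 τ u (0, 1)).congr_of_eventuallyEq
      (Filter.Eventually.of_forall fun τ' => (pd_snd hsm2 τ' u).deriv)
  have hXt : HasDerivAt (fun τ' => γ1 τ' u) (fderiv ℝ F1 (τ, u) (1, 0)) τ := pd_fst hsm1 τ u
  have hYt : HasDerivAt (fun τ' => γ2 τ' u) (fderiv ℝ F2 (τ, u) (1, 0)) τ := pd_fst hsm2 τ u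
  -- identify the t-derivatives of γ1, γ2 with the flow
  have hTx : fderiv ℝ F1 (τ, u) (1, 0) = μ * (-y' / σ) := by
    rw [← (pd_fst hsm1 τ u).deriv]
    exact hflow1 τ hτ u huI
  have hTy : fderiv ℝ F2 (τ, u) (1, 0) = μ * (x' / σ) := by
    rw [← (pd_fst hsm2 τ u).deriv]
    exact hflow2 τ hτ u huI
  -- identify mixed second derivatives via Clairaut and the flow
  have hmix : ∀ (γ : ℝ → ℝ → ℝ) (hsmγ : ContDiff ℝ (⊤ : ℕ∞) (fun p : ℝ × ℝ => γ p.1 p.2))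
      (g : ℝ → ℝ), (∀ v ∈ Ioo (0:ℝ) 1, deriv (fun τ' => γ τ' v) τ = g v) →
      fderiv ℝ (fderiv ℝ (fun p : ℝ × ℝ => γ p.1 p.2)) (τ, u) (1, 0) (0, 1) = deriv g u := by
    intro γ hsmγ g hg
    calc fderiv ℝ (fderiv ℝ (fun p : ℝ × ℝ => γ p.1 p.2)) (τ, u) (1, 0) (0, 1)
        = fderiv ℝ (fderiv ℝ (fun p : ℝ × ℝ => γ p.1 p.2)) (τ, u) (0, 1) (1, 0) :=
          symm2 hsmγ τ u
      _ = deriv (fun v => fderiv ℝ (fun p : ℝ × ℝ => γ p.1 p.2) (τ, v) (1, 0)) u :=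
          ((pd2_snd hsmγ τ u (1, 0)).deriv).symm
      _ = deriv (fun v => deriv (fun τ' => γ τ' v) τ) u :=
          (Filter.EventuallyEq.deriv_eq (Filter.Eventually.of_forall fun v =>
            (pd_fst hsmγ τ v).deriv)).symm
      _ = deriv g u := Filter.EventuallyEq.deriv_eq
          (Filter.eventuallyEq_of_mem (Ioo_mem_nhds hu.1 hu.2) hg)
  -- compute the three mixed derivatives
  have hg1 : HasDerivAt (fun v => m τ v * (-(deriv (γ2 τ) v) / s τ v))
      (Mu' * (-y' / σ) + μ * ((-y2 * σ - -y' * σ') / σ ^ 2)) u :=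
    hμd.mul ((hy'd.neg).div hsd hσ0)
  have hD1 : fderiv ℝ (fderiv ℝ F1) (τ, u) (1, 0) (0, 1)
      = Mu' * (-y' / σ) + μ * ((-y2 * σ - -y' * σ') / σ ^ 2) := by
    rw [hmix γ1 hsm1 _ (fun v hv => hflow1 τ hτ v (Ioo_subset_Icc_self hv))]
    exact hg1.deriv
  have hg2 : HasDerivAt (fun v => m τ v * (deriv (γ1 τ) v / s τ v))
      (Mu' * (x' / σ) + μ * ((x2 * σ - x' * σ') / σ ^ 2)) u :=
    hμd.mul (hx'd.div hsd hσ0)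
  have hD2 : fderiv ℝ (fderiv ℝ F2) (τ, u) (1, 0) (0, 1)
      = Mu' * (x' / σ) + μ * ((x2 * σ - x' * σ') / σ ^ 2) := by
    rw [hmix γ2 hsm2 _ (fun v hv => hflow2 τ hτ v (Ioo_subset_Icc_self hv))]
    exact hg2.deriv
  -- the third one, with the integral term
  have hX : HasDerivAt (fun v => γ1 τ v) x' u := hXd
  have hY : HasDerivAt (fun v => γ2 τ v) y' u := hYd
  have hP : HasDerivAt (fun v => (1/2) * γ2 τ v * deriv (γ2 τ) v
        + (1/2) * γ1 τ v * deriv (γ1 τ) v)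
      ((1/2 * y') * y' + (1/2 * γ2 τ u) * y2 + ((1/2 * x') * x' + (1/2 * γ1 τ u) * x2)) u :=
    ((hY.const_mul (1/2)).mul hy'd).add ((hX.const_mul (1/2)).mul hx'd)
  have hcont : Continuous (fun ξ => m τ ξ * s τ ξ) := by
    have hm : Continuous (fun ξ => m τ ξ) :=
      hsmm.continuous.comp (continuous_const.prodMk continuous_id)
    have hss : Continuous (fun ξ => s τ ξ) := by
      have h := Real.continuous_sqrt.comp
        (((contDeriv hsm1 τ).pow 2).add ((contDeriv hsm2 τ).pow 2))
      exact h.congr fun ξ => ((hs τ ξ)).symm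
    exact hm.mul hss
  have hInt : HasDerivAt (fun v => ∫ ξ in (0:ℝ)..v, m τ ξ * s τ ξ) (μ * σ) u :=
    intervalIntegral.integral_hasDerivAt_right (hcont.intervalIntegrable _ _)
      (hcont.stronglyMeasurable.stronglyMeasurableAtFilter) hcont.continuousAt
  set P : ℝ := (1/2) * γ2 τ u * y' + (1/2) * γ1 τ u * x' with hPdef
  set P' : ℝ := (1/2 * y') * y' + (1/2 * γ2 τ u) * y2 + ((1/2 * x') * x' + (1/2 * γ1 τ u) * x2)
    with hP'def
  have hg3 : HasDerivAt (fun v => m τ v * (((1/2) * γ2 τ v * deriv (γ2 τ) v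
        + (1/2) * γ1 τ v * deriv (γ1 τ) v) / s τ v) - ∫ ξ in (0:ℝ)..v, m τ ξ * s τ ξ)
      (Mu' * (P / σ) + μ * ((P' * σ - P * σ') / σ ^ 2) - μ * σ) u :=
    (hμd.mul (hP.div hsd hσ0)).sub hInt
  have hD3 : fderiv ℝ (fderiv ℝ F3) (τ, u) (1, 0) (0, 1)
      = Mu' * (P / σ) + μ * ((P' * σ - P * σ') / σ ^ 2) - μ * σ := by
    rw [hmix γ3 hsm3 _ (fun v hv => hflow3 τ hτ v (Ioo_subset_Icc_self hv))]
    exact hg3.deriv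
  -- assemble the derivative of W
  have hW := h3t.sub (((hYt.const_mul (-(1/2))).mul h1t).add ((hXt.const_mul (1/2)).mul h2t))
  have hval : fderiv ℝ (fderiv ℝ F3) (τ, u) (1, 0) (0, 1)
      - ((-(1/2) * fderiv ℝ F2 (τ, u) (1, 0)) * deriv (γ1 τ) u
          + (-(1/2) * γ2 τ u) * fderiv ℝ (fderiv ℝ F1) (τ, u) (1, 0) (0, 1)
        + (((1/2) * fderiv ℝ F1 (τ, u) (1, 0)) * deriv (γ2 τ) u
          + ((1/2) * γ1 τ u) * fderiv ℝ (fderiv ℝ F2) (τ, u) (1, 0) (0, 1))) = 0 := by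
    rw [hD1, hD2, hD3, hTx, hTy, ← hx', ← hy']
    have hσsq : σ ^ 2 = x' ^ 2 + y' ^ 2 := by
      rw [hσ, hs, hx', hy']
      exact Real.sq_sqrt (by positivity)
    rw [hPdef, hP'def, hσ']
    trans (μ * (x' ^ 2 + y' ^ 2) / σ - μ * σ)
    · field_simp
      ring
    · rw [← hσsq]
      field_simp
      ring
  exact hval ▸ hW

/-- Motion with normal speed m, corrected by the vertical term
-(∫₀ᵘ m |γᵤ|_g dξ) X₃, preserves horizontality of the evolving curve. -/
theorem normal_motion_with_correction_preserves_horizontality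
    (That : ℝ) (hThat : 0 < That)
    (γ1 γ2 γ3 m s : ℝ → ℝ → ℝ)
    (hsm1 : ContDiff ℝ (⊤ : ℕ∞) (fun p : ℝ × ℝ => γ1 p.1 p.2))
    (hsm2 : ContDiff ℝ (⊤ : ℕ∞) (fun p : ℝ × ℝ => γ2 p.1 p.2))
    (hsm3 : ContDiff ℝ (⊤ : ℕ∞) (fun p : ℝ × ℝ => γ3 p.1 p.2))
    (hsmm : ContDiff ℝ (⊤ : ℕ∞) (fun p : ℝ × ℝ => m p.1 p.2))
    (hs : ∀ t u, s t u = Real.sqrt ((deriv (γ1 t) u)^2 + (deriv (γ2 t) u)^2))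
    (hreg : ∀ t ∈ Ico (0:ℝ) That, ∀ u ∈ Icc (0:ℝ) 1, s t u ≠ 0)
    (hinit : ∀ u ∈ Icc (0:ℝ) 1,
        deriv (γ3 0) u = -(1/2) * γ2 0 u * deriv (γ1 0) u
          + (1/2) * γ1 0 u * deriv (γ2 0) u)
    (hflow1 : ∀ t ∈ Ico (0:ℝ) That, ∀ u ∈ Icc (0:ℝ) 1,
        deriv (fun τ => γ1 τ u) t = m t u * (-(deriv (γ2 t) u) / s t u))
    (hflow2 : ∀ t ∈ Ico (0:ℝ) That, ∀ u ∈ Icc (0:ℝ) 1,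
        deriv (fun τ => γ2 τ u) t = m t u * (deriv (γ1 t) u / s t u))
    (hflow3 : ∀ t ∈ Ico (0:ℝ) That, ∀ u ∈ Icc (0:ℝ) 1,
        deriv (fun τ => γ3 τ u) t =
          m t u * (((1/2) * γ2 t u * deriv (γ2 t) u
              + (1/2) * γ1 t u * deriv (γ1 t) u) / s t u)
            - ∫ ξ in (0:ℝ)..u, m t ξ * s t ξ) :
    ∀ t ∈ Ico (0:ℝ) That, ∀ u ∈ Icc (0:ℝ) 1,
      deriv (γ3 t) u = -(1/2) * γ2 t u * deriv (γ1 t) u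
        + (1/2) * γ1 t u * deriv (γ2 t) u := by
  intro t ht u hu
  have hIoo : ∀ v ∈ Ioo (0:ℝ) 1, deriv (γ3 t) v
      = -(1/2) * γ2 t v * deriv (γ1 t) v + (1/2) * γ1 t v * deriv (γ2 t) v := by
    intro v hv
    set W : ℝ → ℝ := fun τ' => deriv (γ3 τ') v
      - (-(1/2) * γ2 τ' v * deriv (γ1 τ') v + (1/2) * γ1 τ' v * deriv (γ2 τ') v) with hWdef
    have hWd : ∀ τ ∈ Ico (0:ℝ) That, HasDerivAt W 0 τ := fun τ hτ =>
      key_hasDeriv That γ1 γ2 γ3 m s hsm1 hsm2 hsm3 hsmm hs hreg hflow1 hflow2 hflow3 τ hτ v hv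
    have hWt : W t = W 0 := by
      rcases eq_or_lt_of_le ht.1 with h0 | h0
      · rw [← h0]
      · exact constant_of_has_deriv_right_zero
          (fun x hx => ((hWd x ⟨hx.1, lt_of_le_of_lt hx.2 ht.2⟩).continuousAt).continuousWithinAt)
          (fun x hx => (hWd x ⟨hx.1, hx.2.trans ht.2⟩).hasDerivWithinAt)
          t (right_mem_Icc.2 ht.1)
    have hW0 : W 0 = 0 := by
      show deriv (γ3 0) v - _ = 0
      rw [sub_eq_zero]
      exact hinit v (Ioo_subset_Icc_self hv)
    have hWt0 : W t = 0 := hWt.trans hW0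
    have : deriv (γ3 t) v
        - (-(1/2) * γ2 t v * deriv (γ1 t) v + (1/2) * γ1 t v * deriv (γ2 t) v) = 0 := hWt0
    linarith
  have hc3 : Continuous (fun v => deriv (γ3 t) v) := contDeriv hsm3 t
  have hcγ1 : Continuous (fun v => γ1 t v) :=
    hsm1.continuous.comp (continuous_const.prodMk continuous_id)
  have hcγ2 : Continuous (fun v => γ2 t v) :=
    hsm2.continuous.comp (continuous_const.prodMk continuous_id)
  have hrhs : Continuous (fun v => -(1/2) * γ2 t v * deriv (γ1 t) v
      + (1/2) * γ1 t v * deriv (γ2 t) v) :=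
    ((continuous_const.mul hcγ2).mul (contDeriv hsm1 t)).add
      ((continuous_const.mul hcγ1).mul (contDeriv hsm2 t))
  have hcl := Set.EqOn.closure (fun v hv => hIoo v hv) hc3 hrhs
  rw [closure_Ioo (by norm_num : (0:ℝ) ≠ 1)] at hcl
  exact hcl hu
end

section
/- Let λ ≠ 0 and let γ : [0, s_f] → ℝ³ be the horizontal lift starting at the origin of the arc-length parametrized circle arc c(s) = A + (1/λ)(sin(λs - α₀), cos(λs - α₀)), where A = (1/λ)(sin(α₀), cos(α₀)) (so c(0) = 0). Then the third component satisfies γ³(s) = (sin(λs) - λs)/(2λ²) for all s ∈ [0, s_f]. -/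
open Set Real

/-! Differentiating the explicit arc, the integrand `(c¹ (c²)' - c² (c¹)')/2` collapses, by the
addition formula for `cos` and `sin² + cos² = 1`, to `(cos (λξ) - 1)/(2λ)`, whose integral from `0`
is `(sin (λs) - λs)/(2λ²)`. -/

theorem hasDerivAt_sin_mul_sub_div {lam : ℝ} (hlam : lam ≠ 0) (α x : ℝ) :
    HasDerivAt (fun s => sin (lam * s - α) / lam) (cos (lam * x - α)) x := by
  have h := (((hasDerivAt_id x).const_mul lam).sub_const α).sin.div_const lam
  simpa [mul_div_cancel_right₀ _ hlam] using h

theorem hasDerivAt_cos_mul_sub_div {lam : ℝ} (hlam : lam ≠ 0) (α x : ℝ) :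
    HasDerivAt (fun s => cos (lam * s - α) / lam) (-sin (lam * x - α)) x := by
  have h := (((hasDerivAt_id x).const_mul lam).sub_const α).cos.div_const lam
  simpa [mul_div_cancel_right₀ _ hlam, neg_div] using h

theorem circle_arc_lift_integrand {lam : ℝ} (hlam : lam ≠ 0) (α θ : ℝ) :
    -(1/2) * (-cos α / lam + cos θ / lam) * cos θ + (1/2) * (sin α / lam + sin θ / lam) * (-sin θ)
      = (cos (θ + α) - 1) / (2 * lam) := by
  rw [cos_add]
  field_simp
  linear_combination (-1) * sin_sq_add_cos_sq θ

theorem integral_cos_mul_sub_one_div {lam : ℝ} (hlam : lam ≠ 0) (s : ℝ) :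
    ∫ ξ in (0:ℝ)..s, (cos (lam * ξ) - 1) / (2 * lam) = (sin (lam * s) - lam * s) / (2 * lam ^ 2) := by
  rw [intervalIntegral.integral_div, intervalIntegral.integral_sub,
    intervalIntegral.integral_comp_mul_left (fun x => cos x) hlam]
  · simp only [integral_cos, intervalIntegral.integral_const, mul_zero, sin_zero, sub_zero,
      smul_eq_mul, mul_one]
    field_simp
  all_goals exact Continuous.intervalIntegrable (by fun_prop) _ _

theorem lift_of_circle_arc_third_component_general
    (lam α0 sf : ℝ) (hlam : lam ≠ 0)
    (c1 c2 : ℝ → ℝ)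
    (hc1 : c1 = fun s => Real.sin α0 / lam + Real.sin (lam * s - α0) / lam)
    (hc2 : c2 = fun s => -Real.cos α0 / lam + Real.cos (lam * s - α0) / lam) :
    ∀ s ∈ Icc (0:ℝ) sf,
      (∫ ξ in (0:ℝ)..s,
        (-(1/2) * c2 ξ * deriv c1 ξ + (1/2) * c1 ξ * deriv c2 ξ)) =
      (Real.sin (lam * s) - lam * s) / (2 * lam^2) := by
  intro s _
  subst hc1 hc2
  have hd1 (ξ : ℝ) : deriv (fun s => sin α0 / lam + sin (lam * s - α0) / lam) ξ
      = cos (lam * ξ - α0) :=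
    ((hasDerivAt_sin_mul_sub_div hlam α0 ξ).const_add _).deriv
  have hd2 (ξ : ℝ) : deriv (fun s => -cos α0 / lam + cos (lam * s - α0) / lam) ξ
      = -sin (lam * ξ - α0) :=
    ((hasDerivAt_cos_mul_sub_div hlam α0 ξ).const_add _).deriv
  simp_rw [hd1, hd2, circle_arc_lift_integrand hlam, sub_add_cancel]
  exact integral_cos_mul_sub_one_div hlam s

/-- The third component of the horizontal lift, starting at the origin, of the
arc-length parametrized circle arc c(s) = A + (1/λ)(sin(λs-α₀), cos(λs-α₀))
with c(0) = 0 is γ³(s) = (sin(λs) - λs)/(2λ²). -/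
theorem lift_of_circle_arc_third_component
    (lam α0 sf : ℝ) (hlam : lam ≠ 0) (hsf : 0 ≤ sf)
    (c1 c2 : ℝ → ℝ)
    (hc1 : c1 = fun s => Real.sin α0 / lam + Real.sin (lam * s - α0) / lam)
    (hc2 : c2 = fun s => -Real.cos α0 / lam + Real.cos (lam * s - α0) / lam) :
    ∀ s ∈ Icc (0:ℝ) sf,
      (∫ ξ in (0:ℝ)..s,
        (-(1/2) * c2 ξ * deriv c1 ξ + (1/2) * c1 ξ * deriv c2 ξ)) =
      (Real.sin (lam * s) - lam * s) / (2 * lam^2) :=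
  lift_of_circle_arc_third_component_general lam α0 sf hlam c1 c2 hc1 hc2
end

section
/- Fix parameters a, b, α, β ∈ ℝ. The curve γ : [0,1] → ℝ³ given by γ(u) = (au + bu², αu² + βu³, αa u³/6 + aβ u⁴/4 + bβ u⁵/10) is a horizontal curve in the Heisenberg group passing through the origin at u = 0. -/
open Set

lemma hasDerivAt_mul_add_mul_sq (a b u : ℝ) :
    HasDerivAt (fun u => a * u + b * u ^ 2) (a + 2 * b * u) u :=
  (((hasDerivAt_id' u).const_mul a).fun_add ((hasDerivAt_pow 2 u).const_mul b)).congr_deriv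
    (by push_cast; ring)

lemma hasDerivAt_mul_sq_add_mul_cube (a b u : ℝ) :
    HasDerivAt (fun u => a * u ^ 2 + b * u ^ 3) (2 * a * u + 3 * b * u ^ 2) u :=
  (((hasDerivAt_pow 2 u).const_mul a).fun_add ((hasDerivAt_pow 3 u).const_mul b)).congr_deriv
    (by push_cast; ring)

lemma hasDerivAt_cube_div_six_add_quartic_div_four_add_quintic_div_ten (a b c u : ℝ) :
    HasDerivAt (fun u => a * u ^ 3 / 6 + b * u ^ 4 / 4 + c * u ^ 5 / 10)
      (a * u ^ 2 / 2 + b * u ^ 3 + c * u ^ 4 / 2) u :=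
  (((((hasDerivAt_pow 3 u).const_mul a).div_const 6).fun_add
      (((hasDerivAt_pow 4 u).const_mul b).div_const 4)).fun_add
      (((hasDerivAt_pow 5 u).const_mul c).div_const 10)).congr_deriv (by push_cast; ring)

/-- The polynomial curve γ(u) = (au + bu², αu² + βu³, αa u³/6 + aβ u⁴/4 + bβ u⁵/10)
is horizontal and passes through the origin at u = 0, for all parameters. -/
theorem polynomial_curve_is_horizontal
    (a b α β : ℝ) (γ1 γ2 γ3 : ℝ → ℝ)
    (hγ1 : γ1 = fun u => a * u + b * u^2)
    (hγ2 : γ2 = fun u => α * u^2 + β * u^3)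
    (hγ3 : γ3 = fun u => α * a * u^3 / 6 + a * β * u^4 / 4 + b * β * u^5 / 10) :
    γ1 0 = 0 ∧ γ2 0 = 0 ∧ γ3 0 = 0 ∧
    ∀ u ∈ Icc (0:ℝ) 1,
      deriv γ3 u = -(1/2) * γ2 u * deriv γ1 u + (1/2) * γ1 u * deriv γ2 u := by
  subst hγ1 hγ2 hγ3
  refine ⟨by simp, by simp, by simp, fun u _ => ?_⟩
  rw [(hasDerivAt_mul_add_mul_sq a b u).deriv, (hasDerivAt_mul_sq_add_mul_cube α β u).deriv,
    (hasDerivAt_cube_div_six_add_quartic_div_four_add_quintic_div_ten (α * a) (a * β) (b * β)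
      u).deriv]
  ring
end

section
/- Let c be a smooth solution of the area-constrained curve shortening flow cₜ = k⃗ + λ(t) n⃗ on (0,T) × (0,1) with fixed endpoints c(t,0) = p, c(t,1) = q, where λ(t) = -(∫₀¹ k |cᵤ| du)/L_E(c(t)). Then the Euclidean length decreases: (d/dt) L_E(c(t)) = -∫₀¹ |cₜ|² |cᵤ| du ≤ 0. -/
open Set

noncomputable def pdT (F : ℝ × ℝ → ℝ) (p : ℝ × ℝ) : ℝ := fderiv ℝ F p (1, 0)
noncomputable def pdU (F : ℝ × ℝ → ℝ) (p : ℝ × ℝ) : ℝ := fderiv ℝ F p (0, 1)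

theorem hasDerivAt_sliceU {F : ℝ × ℝ → ℝ} {n : WithTop ℕ∞} (hF : ContDiff ℝ n F)
    (hn : 1 ≤ n) (x y : ℝ) :
    HasDerivAt (fun v => F (x, v)) (pdU F (x, y)) y := by
  have h1 : HasDerivAt (fun v : ℝ => ((x, v) : ℝ × ℝ)) ((0 : ℝ), (1 : ℝ)) y :=
    (hasDerivAt_const y x).prodMk (hasDerivAt_id y)
  exact ((hF.differentiable (zero_lt_one.trans_le hn).ne' (x, y)).hasFDerivAt).comp_hasDerivAt y h1

theorem hasDerivAt_sliceT {F : ℝ × ℝ → ℝ} {n : WithTop ℕ∞} (hF : ContDiff ℝ n F)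
    (hn : 1 ≤ n) (x y : ℝ) :
    HasDerivAt (fun v => F (v, y)) (pdT F (x, y)) x := by
  have h1 : HasDerivAt (fun v : ℝ => ((v, y) : ℝ × ℝ)) ((1 : ℝ), (0 : ℝ)) x :=
    (hasDerivAt_id x).prodMk (hasDerivAt_const x y)
  exact ((hF.differentiable (zero_lt_one.trans_le hn).ne' (x, y)).hasFDerivAt).comp_hasDerivAt x h1

theorem contDiff_pdU {F : ℝ × ℝ → ℝ} {n m : WithTop ℕ∞} (hF : ContDiff ℝ n F)
    (hmn : m + 1 ≤ n) : ContDiff ℝ m (pdU F) :=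
  (hF.fderiv_right hmn).clm_apply contDiff_const

theorem contDiff_pdT {F : ℝ × ℝ → ℝ} {n m : WithTop ℕ∞} (hF : ContDiff ℝ n F)
    (hmn : m + 1 ≤ n) : ContDiff ℝ m (pdT F) :=
  (hF.fderiv_right hmn).clm_apply contDiff_const

theorem clairaut {F : ℝ × ℝ → ℝ} {n : WithTop ℕ∞} (hF : ContDiff ℝ n F)
    (hn : 2 ≤ n) (p : ℝ × ℝ) : pdU (pdT F) p = pdT (pdU F) p := by
  have hdF : ∀ q, HasFDerivAt F (fderiv ℝ F q) q := fun q =>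
    (hF.differentiable (zero_lt_two.trans_le hn).ne' q).hasFDerivAt
  have hd2 : HasFDerivAt (fderiv ℝ F) (fderiv ℝ (fderiv ℝ F) p) p := by
    have : ContDiff ℝ 1 (fderiv ℝ F) := hF.fderiv_right (by exact_mod_cast hn)
    exact (this.differentiable one_ne_zero p).hasFDerivAt
  have hsymm := second_derivative_symmetric hdF hd2 (1, 0) (0, 1)
  have h1 : HasFDerivAt (pdT F)
      ((ContinuousLinearMap.apply ℝ ℝ ((1 : ℝ), (0 : ℝ))).comp (fderiv ℝ (fderiv ℝ F) p)) p :=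
    (ContinuousLinearMap.apply ℝ ℝ ((1 : ℝ), (0 : ℝ))).hasFDerivAt.comp p hd2
  have h2 : HasFDerivAt (pdU F)
      ((ContinuousLinearMap.apply ℝ ℝ ((0 : ℝ), (1 : ℝ))).comp (fderiv ℝ (fderiv ℝ F) p)) p :=
    (ContinuousLinearMap.apply ℝ ℝ ((0 : ℝ), (1 : ℝ))).hasFDerivAt.comp p hd2
  have e1 : pdU (pdT F) p = fderiv ℝ (fderiv ℝ F) p (0, 1) (1, 0) := by
    have := h1.fderiv
    simp only [pdU, this]; rfl
  have e2 : pdT (pdU F) p = fderiv ℝ (fderiv ℝ F) p (1, 0) (0, 1) := by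
    have := h2.fderiv
    simp only [pdT, this]; rfl
  rw [e1, e2, hsymm]

theorem key_alg (a b a' b' σ lam P1 P2 x1 x2 kk Su : ℝ) (hσ : σ ≠ 0)
    (hσ2 : σ ^ 2 = a ^ 2 + b ^ 2)
    (hSu : Su = (a * a' + b * b') / σ)
    (hP1 : P1 = (a' * σ - a * Su) / σ ^ 2)
    (hP2 : P2 = (b' * σ - b * Su) / σ ^ 2)
    (hkk : kk = (b' * a - b * a') / σ ^ 3)
    (hx1 : x1 = (1 / σ) * P1 + lam * (-b / σ))
    (hx2 : x2 = (1 / σ) * P2 + lam * (a / σ)) :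
    P1 * x1 + P2 * x2 = (x1 ^ 2 + x2 ^ 2) * σ - lam * (kk * σ) - lam ^ 2 * σ := by
  subst hSu hP1 hP2 hkk hx1 hx2
  field_simp
  linear_combination (σ^6 * lam^2) * hσ2

/-- For a smooth solution of the area-constrained curve shortening flow
cₜ = k⃗ + λ(t) n⃗ with fixed endpoints, the Euclidean length decreases:
(d/dt) L_E(c(t)) = -∫₀¹ |cₜ|² |cᵤ| du ≤ 0. -/
theorem area_constrained_CSF_length_decreases
    (T p1 p2 q1 q2 : ℝ) (hT : 0 < T)
    (c1 c2 s k : ℝ → ℝ → ℝ) (lam : ℝ → ℝ)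
    (hsm1 : ContDiff ℝ (⊤ : ℕ∞) (fun p : ℝ × ℝ => c1 p.1 p.2))
    (hsm2 : ContDiff ℝ (⊤ : ℕ∞) (fun p : ℝ × ℝ => c2 p.1 p.2))
    (hs : ∀ t u, s t u = Real.sqrt ((deriv (c1 t) u)^2 + (deriv (c2 t) u)^2))
    (hreg : ∀ t u, 0 < s t u)
    (hk : ∀ t u, k t u =
        (deriv (deriv (c2 t)) u * deriv (c1 t) u
          - deriv (c2 t) u * deriv (deriv (c1 t)) u) /
          ((deriv (c1 t) u)^2 + (deriv (c2 t) u)^2) ^ ((3:ℝ)/2))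
    (hlam : ∀ t, lam t =
        -(∫ u in (0:ℝ)..1, k t u * s t u) / (∫ u in (0:ℝ)..1, s t u))
    (hbdry : ∀ t ∈ Ioo (0:ℝ) T,
        c1 t 0 = p1 ∧ c2 t 0 = p2 ∧ c1 t 1 = q1 ∧ c2 t 1 = q2)
    (hflow1 : ∀ t ∈ Ioo (0:ℝ) T, ∀ u ∈ Ioo (0:ℝ) 1,
        deriv (fun τ => c1 τ u) t =
          (1 / s t u) * deriv (fun v => deriv (c1 t) v / s t v) u
            + lam t * (-(deriv (c2 t) u) / s t u))
    (hflow2 : ∀ t ∈ Ioo (0:ℝ) T, ∀ u ∈ Ioo (0:ℝ) 1,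
        deriv (fun τ => c2 τ u) t =
          (1 / s t u) * deriv (fun v => deriv (c2 t) v / s t v) u
            + lam t * (deriv (c1 t) u / s t u)) :
    ∀ t ∈ Ioo (0:ℝ) T,
      deriv (fun τ => ∫ u in (0:ℝ)..1, s τ u) t =
        -(∫ u in (0:ℝ)..1,
          ((deriv (fun τ => c1 τ u) t)^2 + (deriv (fun τ => c2 τ u) t)^2)
            * s t u) ∧
      deriv (fun τ => ∫ u in (0:ℝ)..1, s τ u) t ≤ 0 := by
  intro t ht
  set F : ℝ × ℝ → ℝ := fun p => c1 p.1 p.2 with hF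
  set G : ℝ × ℝ → ℝ := fun p => c2 p.1 p.2 with hG
  have hc3 : ContDiff ℝ 3 F := hsm1.of_le (WithTop.coe_le_coe.mpr (le_top : (3:ℕ∞) ≤ ⊤))
  have hg3 : ContDiff ℝ 3 G := hsm2.of_le (WithTop.coe_le_coe.mpr (le_top : (3:ℕ∞) ≤ ⊤))
  have h13 : (1 : WithTop ℕ∞) ≤ 3 := by norm_num
  have h23 : (2 : WithTop ℕ∞) ≤ 3 := by norm_num
  have h2p1 : (2 : WithTop ℕ∞) + 1 ≤ 3 := by norm_num
  have h1p1 : (1 : WithTop ℕ∞) + 1 ≤ 2 := by norm_num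
  have h0p1 : (0 : WithTop ℕ∞) + 1 ≤ 1 := by norm_num
  have hA1 : ContDiff ℝ 2 (pdU F) := contDiff_pdU hc3 h2p1
  have hA2 : ContDiff ℝ 2 (pdU G) := contDiff_pdU hg3 h2p1
  have hX1 : ContDiff ℝ 2 (pdT F) := contDiff_pdT hc3 h2p1
  have hX2 : ContDiff ℝ 2 (pdT G) := contDiff_pdT hg3 h2p1
  -- derivatives of c1, c2 slices
  have hdc1 : ∀ x y, deriv (c1 x) y = pdU F (x, y) := fun x y =>
    (hasDerivAt_sliceU hc3 h13 x y).deriv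
  have hdc2 : ∀ x y, deriv (c2 x) y = pdU G (x, y) := fun x y =>
    (hasDerivAt_sliceU hg3 h13 x y).deriv
  -- the joint speed function
  set S : ℝ × ℝ → ℝ := fun p => Real.sqrt ((pdU F p) ^ 2 + (pdU G p) ^ 2) with hSdef
  have hsS : ∀ x y, s x y = S (x, y) := by
    intro x y; rw [hs, hdc1, hdc2]
  have hSpos : ∀ p : ℝ × ℝ, 0 < S p := by
    intro p; have := hreg p.1 p.2; rwa [hsS] at this
  have hqpos : ∀ p : ℝ × ℝ, 0 < (pdU F p) ^ 2 + (pdU G p) ^ 2 := fun p =>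
    Real.sqrt_pos.mp (hSpos p)
  have hq2 : ContDiff ℝ 2 (fun p => (pdU F p) ^ 2 + (pdU G p) ^ 2) :=
    (hA1.pow 2).add (hA2.pow 2)
  have hS1 : ContDiff ℝ 1 S := by
    rw [contDiff_iff_contDiffAt]
    intro p
    exact (Real.contDiffAt_sqrt (hqpos p).ne').comp p
      ((hq2.of_le one_le_two).contDiffAt)
  -- derivative of S in the t-direction, with explicit value
  have hSslT : ∀ x y, HasDerivAt (fun τ => S (τ, y))
      ((pdU F (x, y) * pdT (pdU F) (x, y) + pdU G (x, y) * pdT (pdU G) (x, y)) / S (x, y)) x := by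
    intro x y
    have h1 : HasDerivAt (fun τ => (pdU F (τ, y)) ^ 2 + (pdU G (τ, y)) ^ 2)
        (2 * pdU F (x, y) * pdT (pdU F) (x, y) + 2 * pdU G (x, y) * pdT (pdU G) (x, y)) x := by
      have := ((hasDerivAt_sliceT hA1 (by norm_num) x y).fun_pow 2).add
        ((hasDerivAt_sliceT hA2 (by norm_num) x y).fun_pow 2)
      exact this.congr_deriv (by ring)
    have h2 := (Real.hasDerivAt_sqrt (hqpos (x, y)).ne').comp x h1
    refine h2.congr_deriv ?_
    have hSne : S (x, y) ≠ 0 := (hSpos (x, y)).ne'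
    simp only [hSdef]
    field_simp
  have hSslU : ∀ x y, HasDerivAt (fun v => S (x, v))
      ((pdU F (x, y) * pdU (pdU F) (x, y) + pdU G (x, y) * pdU (pdU G) (x, y)) / S (x, y)) y := by
    intro x y
    have h1 : HasDerivAt (fun v => (pdU F (x, v)) ^ 2 + (pdU G (x, v)) ^ 2)
        (2 * pdU F (x, y) * pdU (pdU F) (x, y) + 2 * pdU G (x, y) * pdU (pdU G) (x, y)) y := by
      have := ((hasDerivAt_sliceU hA1 (by norm_num) x y).fun_pow 2).add
        ((hasDerivAt_sliceU hA2 (by norm_num) x y).fun_pow 2)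
      exact this.congr_deriv (by ring)
    have h2 := (Real.hasDerivAt_sqrt (hqpos (x, y)).ne').comp y h1
    refine h2.congr_deriv ?_
    have hSne : S (x, y) ≠ 0 := (hSpos (x, y)).ne'
    simp only [hSdef]
    field_simp
  have hpdTS : ∀ x y, pdT S (x, y) =
      (pdU F (x, y) * pdT (pdU F) (x, y) + pdU G (x, y) * pdT (pdU G) (x, y)) / S (x, y) :=
    fun x y => (hasDerivAt_sliceT hS1 le_rfl x y).unique (hSslT x y)
  -- differentiation under the integral sign
  have hScont : Continuous S := hS1.continuous
  have hpdTScont : Continuous (pdT S) := contDiff_zero.mp (contDiff_pdT hS1 h0p1)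
  have key1 : HasDerivAt (fun τ => ∫ u in (0:ℝ)..1, S (τ, u))
      (∫ u in (0:ℝ)..1, pdT S (t, u)) t := by
    have hK : IsCompact (Icc (t - 1) (t + 1) ×ˢ Icc (0:ℝ) 1) :=
      isCompact_Icc.prod isCompact_Icc
    obtain ⟨C, hC⟩ := hK.exists_bound_of_continuousOn hpdTScont.continuousOn
    have hmem : ∀ u ∈ Set.uIoc (0:ℝ) 1, ∀ x ∈ Metric.ball t 1,
        ((x, u) : ℝ × ℝ) ∈ Icc (t - 1) (t + 1) ×ˢ Icc (0:ℝ) 1 := by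
      intro u hu x hx
      rw [Set.uIoc_of_le (by norm_num : (0:ℝ) ≤ 1)] at hu
      have hx' := abs_lt.mp (by rwa [Metric.mem_ball, Real.dist_eq] at hx)
      exact ⟨⟨by linarith [hx'.1], by linarith [hx'.2]⟩, ⟨hu.1.le, hu.2⟩⟩
    refine (intervalIntegral.hasDerivAt_integral_of_dominated_loc_of_deriv_le
      (F := fun x u => S (x, u)) (F' := fun x u => pdT S (x, u)) (bound := fun _ => C)
      (Metric.ball_mem_nhds t one_pos) ?_ ?_ ?_ ?_ ?_ ?_).2
    · exact Filter.Eventually.of_forall fun x =>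
        (hScont.comp (continuous_const.prodMk continuous_id)).aestronglyMeasurable
    · exact (hScont.comp (continuous_const.prodMk continuous_id)).intervalIntegrable 0 1
    · exact (hpdTScont.comp (continuous_const.prodMk continuous_id)).aestronglyMeasurable
    · exact Filter.Eventually.of_forall fun u hu x hx => hC _ (hmem u hu x hx)
    · exact intervalIntegrable_const
    · exact Filter.Eventually.of_forall fun u _ x _ => hasDerivAt_sliceT hS1 le_rfl x u
  -- fixed-time functions of u
  set a : ℝ → ℝ := fun u => pdU F (t, u) with ha
  set b : ℝ → ℝ := fun u => pdU G (t, u) with hb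
  set a' : ℝ → ℝ := fun u => pdU (pdU F) (t, u) with ha'
  set b' : ℝ → ℝ := fun u => pdU (pdU G) (t, u) with hb'
  set x1 : ℝ → ℝ := fun u => pdT F (t, u) with hx1
  set x2 : ℝ → ℝ := fun u => pdT G (t, u) with hx2
  set σ : ℝ → ℝ := fun u => S (t, u) with hσ
  have hσpos : ∀ u, 0 < σ u := fun u => hSpos (t, u)
  have hσne : ∀ u, σ u ≠ 0 := fun u => (hσpos u).ne'
  set Su : ℝ → ℝ := fun u => (a u * a' u + b u * b' u) / σ u with hSu
  set T1 : ℝ → ℝ := fun u => a u / σ u with hT1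
  set T2 : ℝ → ℝ := fun u => b u / σ u with hT2
  set P1 : ℝ → ℝ := fun u => (a' u * σ u - a u * Su u) / σ u ^ 2 with hP1
  set P2 : ℝ → ℝ := fun u => (b' u * σ u - b u * Su u) / σ u ^ 2 with hP2
  -- continuity of everything
  have slice : Continuous (fun u : ℝ => ((t, u) : ℝ × ℝ)) :=
    continuous_const.prodMk continuous_id
  have hacont : Continuous a := (hA1.continuous).comp slice
  have hbcont : Continuous b := (hA2.continuous).comp slice
  have ha'cont : Continuous a' :=
    (contDiff_zero.mp (contDiff_pdU hA1 (by norm_num))).comp slice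
  have hb'cont : Continuous b' :=
    (contDiff_zero.mp (contDiff_pdU hA2 (by norm_num))).comp slice
  have hx1cont : Continuous x1 := (hX1.continuous).comp slice
  have hx2cont : Continuous x2 := (hX2.continuous).comp slice
  have hσcont : Continuous σ := hScont.comp slice
  have hSucont : Continuous Su :=
    ((hacont.mul ha'cont).add (hbcont.mul hb'cont)).div hσcont hσne
  have hT1cont : Continuous T1 := hacont.div hσcont hσne
  have hT2cont : Continuous T2 := hbcont.div hσcont hσne
  have hP1cont : Continuous P1 :=
    ((ha'cont.mul hσcont).sub (hacont.mul hSucont)).div (hσcont.pow 2)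
      (fun u => pow_ne_zero 2 (hσne u))
  have hP2cont : Continuous P2 :=
    ((hb'cont.mul hσcont).sub (hbcont.mul hSucont)).div (hσcont.pow 2)
      (fun u => pow_ne_zero 2 (hσne u))
  -- derivatives in u
  have hau : ∀ u, HasDerivAt a (a' u) u := fun u => hasDerivAt_sliceU hA1 (by norm_num) t u
  have hbu : ∀ u, HasDerivAt b (b' u) u := fun u => hasDerivAt_sliceU hA2 (by norm_num) t u
  have hσu : ∀ u, HasDerivAt σ (Su u) u := fun u => hSslU t u
  have hx1u : ∀ u, HasDerivAt x1 (pdU (pdT F) (t, u)) u := fun u =>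
    hasDerivAt_sliceU hX1 (by norm_num) t u
  have hx2u : ∀ u, HasDerivAt x2 (pdU (pdT G) (t, u)) u := fun u =>
    hasDerivAt_sliceU hX2 (by norm_num) t u
  have hz1cont : Continuous (fun u => pdU (pdT F) (t, u)) :=
    (contDiff_zero.mp (contDiff_pdU hX1 (by norm_num))).comp slice
  have hz2cont : Continuous (fun u => pdU (pdT G) (t, u)) :=
    (contDiff_zero.mp (contDiff_pdU hX2 (by norm_num))).comp slice
  have hT1u : ∀ u, HasDerivAt T1 (P1 u) u := fun u => (hau u).div (hσu u) (hσne u)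
  have hT2u : ∀ u, HasDerivAt T2 (P2 u) u := fun u => (hbu u).div (hσu u) (hσne u)
  -- the integrand of the differentiated length
  have hintegrand : ∀ u : ℝ, pdT S (t, u) =
      P1 u * x1 u + T1 u * pdU (pdT F) (t, u)
        + (P2 u * x2 u + T2 u * pdU (pdT G) (t, u))
        - (P1 u * x1 u + P2 u * x2 u) := by
    intro u
    rw [hpdTS t u, clairaut hc3 h23 (t, u), clairaut hg3 h23 (t, u)]
    simp only [hT1, hT2]
    field_simp
    ring
  -- boundary values vanish
  have hbdry0 : x1 0 = 0 ∧ x2 0 = 0 ∧ x1 1 = 0 ∧ x2 1 = 0 := by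
    have hmem : Ioo (0:ℝ) T ∈ nhds t := isOpen_Ioo.mem_nhds ht
    have e1 : x1 0 = deriv (fun τ => c1 τ 0) t := (hasDerivAt_sliceT hc3 h13 t 0).deriv.symm
    have e2 : x2 0 = deriv (fun τ => c2 τ 0) t := (hasDerivAt_sliceT hg3 h13 t 0).deriv.symm
    have e3 : x1 1 = deriv (fun τ => c1 τ 1) t := (hasDerivAt_sliceT hc3 h13 t 1).deriv.symm
    have e4 : x2 1 = deriv (fun τ => c2 τ 1) t := (hasDerivAt_sliceT hg3 h13 t 1).deriv.symm
    have hev1 : (fun τ => c1 τ 0) =ᶠ[nhds t] (fun _ => p1) :=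
      Filter.eventually_of_mem hmem fun τ hτ => (hbdry τ hτ).1
    have hev2 : (fun τ => c2 τ 0) =ᶠ[nhds t] (fun _ => p2) :=
      Filter.eventually_of_mem hmem fun τ hτ => (hbdry τ hτ).2.1
    have hev3 : (fun τ => c1 τ 1) =ᶠ[nhds t] (fun _ => q1) :=
      Filter.eventually_of_mem hmem fun τ hτ => (hbdry τ hτ).2.2.1
    have hev4 : (fun τ => c2 τ 1) =ᶠ[nhds t] (fun _ => q2) :=
      Filter.eventually_of_mem hmem fun τ hτ => (hbdry τ hτ).2.2.2
    refine ⟨?_, ?_, ?_, ?_⟩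
    · rw [e1, hev1.deriv_eq, deriv_const]
    · rw [e2, hev2.deriv_eq, deriv_const]
    · rw [e3, hev3.deriv_eq, deriv_const]
    · rw [e4, hev4.deriv_eq, deriv_const]
  -- integration by parts
  have hIBP1 : ∫ u in (0:ℝ)..1, (P1 u * x1 u + T1 u * pdU (pdT F) (t, u)) = 0 := by
    rw [intervalIntegral.integral_deriv_mul_eq_sub
      (fun u _ => hT1u u) (fun u _ => hx1u u)
      (hP1cont.intervalIntegrable 0 1) (hz1cont.intervalIntegrable 0 1),
      hbdry0.1, hbdry0.2.2.1]
    ring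
  have hIBP2 : ∫ u in (0:ℝ)..1, (P2 u * x2 u + T2 u * pdU (pdT G) (t, u)) = 0 := by
    rw [intervalIntegral.integral_deriv_mul_eq_sub
      (fun u _ => hT2u u) (fun u _ => hx2u u)
      (hP2cont.intervalIntegrable 0 1) (hz2cont.intervalIntegrable 0 1),
      hbdry0.2.1, hbdry0.2.2.2]
    ring
  have step1 : ∫ u in (0:ℝ)..1, pdT S (t, u) = -∫ u in (0:ℝ)..1, (P1 u * x1 u + P2 u * x2 u) := by
    have : (fun u => pdT S (t, u)) = fun u =>
        (P1 u * x1 u + T1 u * pdU (pdT F) (t, u))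
          + (P2 u * x2 u + T2 u * pdU (pdT G) (t, u))
          - (P1 u * x1 u + P2 u * x2 u) := by
      funext u; rw [hintegrand u]
    rw [this, intervalIntegral.integral_sub, intervalIntegral.integral_add, hIBP1, hIBP2]
    · ring
    · exact ((hP1cont.mul hx1cont).add (hT1cont.mul hz1cont)).intervalIntegrable 0 1
    · exact ((hP2cont.mul hx2cont).add (hT2cont.mul hz2cont)).intervalIntegrable 0 1
    · exact (((hP1cont.mul hx1cont).add (hT1cont.mul hz1cont)).add
        ((hP2cont.mul hx2cont).add (hT2cont.mul hz2cont))).intervalIntegrable 0 1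
    · exact ((hP1cont.mul hx1cont).add (hP2cont.mul hx2cont)).intervalIntegrable 0 1
  -- curvature formula in terms of a, b, a', b', σ
  have hσ2 : ∀ u, σ u ^ 2 = a u ^ 2 + b u ^ 2 := fun u => Real.sq_sqrt (hqpos (t, u)).le
  have hderivc1t : deriv (c1 t) = a := funext fun v => hdc1 t v
  have hderivc2t : deriv (c2 t) = b := funext fun v => hdc2 t v
  have hkt : ∀ u, k t u = (b' u * a u - b u * a' u) / σ u ^ 3 := by
    intro u
    have hrpow : (a u ^ 2 + b u ^ 2) ^ ((3:ℝ)/2) = σ u ^ 3 := by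
      rw [← hσ2 u, ← Real.rpow_natCast (σ u) 2, ← Real.rpow_natCast (σ u) 3,
        ← Real.rpow_mul (hσpos u).le]
      norm_num
    rw [hk t u, hdc1, hdc2, hderivc1t, hderivc2t, (hau u).deriv, (hbu u).deriv, hrpow]
  have hderivslice1 : ∀ u, deriv (fun τ => c1 τ u) t = x1 u := fun u =>
    (hasDerivAt_sliceT hc3 h13 t u).deriv
  have hderivslice2 : ∀ u, deriv (fun τ => c2 τ u) t = x2 u := fun u =>
    (hasDerivAt_sliceT hg3 h13 t u).deriv
  have hstσ : ∀ u, s t u = σ u := fun u => hsS t u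
  -- the flow equations in local notation
  have hfl1 : ∀ u ∈ Ioo (0:ℝ) 1, x1 u = (1 / σ u) * P1 u + lam t * (-b u / σ u) := by
    intro u hu
    have e := hflow1 t ht u hu
    rw [show (fun v => deriv (c1 t) v / s t v) = T1 from
      funext fun v => by rw [hderivc1t, hstσ], (hT1u u).deriv, hstσ, hderivc2t,
      hderivslice1] at e
    exact e
  have hfl2 : ∀ u ∈ Ioo (0:ℝ) 1, x2 u = (1 / σ u) * P2 u + lam t * (a u / σ u) := by
    intro u hu
    have e := hflow2 t ht u hu
    rw [show (fun v => deriv (c2 t) v / s t v) = T2 from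
      funext fun v => by rw [hderivc2t, hstσ], (hT2u u).deriv, hstσ, hderivc1t,
      hderivslice2] at e
    exact e
  -- pointwise identity in the interior
  have hpt : ∀ u ∈ Ioo (0:ℝ) 1, P1 u * x1 u + P2 u * x2 u =
      (x1 u ^ 2 + x2 u ^ 2) * σ u - lam t * (k t u * s t u) - lam t ^ 2 * σ u := by
    intro u hu
    rw [hstσ]
    exact key_alg (a u) (b u) (a' u) (b' u) (σ u) (lam t) (P1 u) (P2 u) (x1 u) (x2 u)
      (k t u) (Su u) (hσne u) (hσ2 u) rfl rfl rfl (hkt u) (hfl1 u hu) (hfl2 u hu)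
  -- continuity of k t
  have hktfun : k t = fun u => (b' u * a u - b u * a' u) / σ u ^ 3 := funext hkt
  have hktcont : Continuous (k t) := by
    rw [hktfun]
    exact ((hb'cont.mul hacont).sub (hbcont.mul ha'cont)).div (hσcont.pow 3)
      (fun u => pow_ne_zero 3 (hσne u))
  have hstfun : (fun u => s t u) = σ := funext hstσ
  have hstcont : Continuous (fun u => s t u) := hstfun ▸ hσcont
  -- split the integral
  have step2 : ∫ u in (0:ℝ)..1, (P1 u * x1 u + P2 u * x2 u) =
      (∫ u in (0:ℝ)..1, (x1 u ^ 2 + x2 u ^ 2) * σ u)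
        - lam t * (∫ u in (0:ℝ)..1, k t u * s t u)
        - lam t ^ 2 * (∫ u in (0:ℝ)..1, s t u) := by
    have hae : ∀ᵐ (u : ℝ), u ≠ 1 := by
      refine MeasureTheory.ae_iff.mpr ?_
      simp [show {u : ℝ | ¬u ≠ 1} = {1} by ext u; simp]
    have hcongr : ∫ u in (0:ℝ)..1, (P1 u * x1 u + P2 u * x2 u) =
        ∫ u in (0:ℝ)..1, ((x1 u ^ 2 + x2 u ^ 2) * σ u
          - lam t * (k t u * s t u) - lam t ^ 2 * σ u) := by
      refine intervalIntegral.integral_congr_ae ?_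
      filter_upwards [hae] with u hne hu
      rw [Set.uIoc_of_le (by norm_num : (0:ℝ) ≤ 1)] at hu
      exact hpt u ⟨hu.1, lt_of_le_of_ne hu.2 hne⟩
    rw [hcongr, intervalIntegral.integral_sub, intervalIntegral.integral_sub,
      intervalIntegral.integral_const_mul, intervalIntegral.integral_const_mul]
    · rw [show (∫ u in (0:ℝ)..1, σ u) = ∫ u in (0:ℝ)..1, s t u from
        intervalIntegral.integral_congr fun u _ => (hstσ u).symm]
    · exact (((hx1cont.pow 2).add (hx2cont.pow 2)).mul hσcont).intervalIntegrable 0 1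
    · exact (continuous_const.mul (hktcont.mul hstcont)).intervalIntegrable 0 1
    · exact ((((hx1cont.pow 2).add (hx2cont.pow 2)).mul hσcont).sub
        (continuous_const.mul (hktcont.mul hstcont))).intervalIntegrable 0 1
    · exact (continuous_const.mul hσcont).intervalIntegrable 0 1
  -- the lambda terms cancel
  have hIs : 0 < ∫ u in (0:ℝ)..1, s t u :=
    intervalIntegral.intervalIntegral_pos_of_pos_on
      (hstcont.intervalIntegrable 0 1) (fun u _ => hreg t u) one_pos
  have hcancel : lam t * (∫ u in (0:ℝ)..1, k t u * s t u)
      + lam t ^ 2 * (∫ u in (0:ℝ)..1, s t u) = 0 := by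
    rw [hlam t]
    field_simp
    ring
  -- put everything together
  have hfinal : deriv (fun τ => ∫ u in (0:ℝ)..1, s τ u) t =
      -∫ u in (0:ℝ)..1, (x1 u ^ 2 + x2 u ^ 2) * σ u := by
    have hL : (fun τ => ∫ u in (0:ℝ)..1, s τ u)
        = fun τ => ∫ u in (0:ℝ)..1, S (τ, u) :=
      funext fun τ => intervalIntegral.integral_congr fun u _ => hsS τ u
    rw [hL, key1.deriv, step1, step2]
    linarith [hcancel]
  have hRHS : (∫ u in (0:ℝ)..1,
      ((deriv (fun τ => c1 τ u) t) ^ 2 + (deriv (fun τ => c2 τ u) t) ^ 2) * s t u)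
      = ∫ u in (0:ℝ)..1, (x1 u ^ 2 + x2 u ^ 2) * σ u :=
    intervalIntegral.integral_congr fun u _ => by
      rw [hderivslice1, hderivslice2, hstσ]
  constructor
  · rw [hfinal, hRHS]
  · rw [hfinal]
    have : 0 ≤ ∫ u in (0:ℝ)..1, (x1 u ^ 2 + x2 u ^ 2) * σ u :=
      intervalIntegral.integral_nonneg (by norm_num) fun u _ =>
        mul_nonneg (by positivity) (hσpos u).le
    linarith
end
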